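/- Let n ≥ 2 and δ > ln n + 1. Let z ∈ ℝ^n satisfy z_i − z_j > δ for all 1 ≤ i < j ≤ n (so the entries are strictly decreasing with gaps greater than δ). Then Boltz(z) > Boltz(z′), where z′ = (z_1, z_1 − δ, z_1 − δ, …, z_1 − δ) ∈ ℝ^n. -/

import Mathlib

/-!
Boltz is shift invariant, so we may take `z₁ = 0`; writing the other entries as `-dᵢ` with
`dᵢ > δ`, we get `Boltz = -(∑ dᵢ e^{-dᵢ}) / (1 + ∑ e^{-dᵢ})`, and the flat vector is the case
`dᵢ = δ`. After cross-multiplying, the comparison splits into one inequality per entry,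
`(d (1 + c) - δ c) e^{-d} < δ e^{-δ}` with `c = (n - 1) e^{-δ}`, which follows from
`e^u ≥ 1 + u` as soon as `1 + c < δ`. The hypothesis `δ > ln n + 1` guarantees this, since
`c < (n - 1) / n ≤ ln n`.
-/

/-- The softmax of a vector `z ∈ ℝⁿ`: `softmax(z)_i = exp(z_i) / ∑_j exp(z_j)`. -/
noncomputable def softmaxVec {n : ℕ} (z : Fin n → ℝ) : Fin n → ℝ :=
  fun i => Real.exp (z i) / ∑ j, Real.exp (z j)

/-- The Boltzmann operator `Boltz(z) = ∑_i z_i · softmax(z)_i`. -/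
noncomputable def boltz {n : ℕ} (z : Fin n → ℝ) : ℝ :=
  ∑ i, z i * softmaxVec z i

open Real Finset

lemma sum_softmaxVec {n : ℕ} [NeZero n] (z : Fin n → ℝ) : ∑ i, softmaxVec z i = 1 := by
  simp only [softmaxVec, ← sum_div]
  exact div_self (sum_pos (fun _ _ => exp_pos _) univ_nonempty).ne'

lemma softmaxVec_add_const {n : ℕ} (z : Fin n → ℝ) (a : ℝ) :
    softmaxVec (fun i => z i + a) = softmaxVec z := by
  funext i
  simp only [softmaxVec, exp_add, ← sum_mul]
  exact mul_div_mul_right _ _ (exp_pos a).ne'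

lemma boltz_add_const {n : ℕ} [NeZero n] (z : Fin n → ℝ) (a : ℝ) :
    boltz (fun i => z i + a) = boltz z + a := by
  simp only [boltz, softmaxVec_add_const, add_mul, sum_add_distrib, ← mul_sum,
    sum_softmaxVec, mul_one]

lemma boltz_eq_div {n : ℕ} (z : Fin n → ℝ) :
    boltz z = (∑ i, z i * exp (z i)) / ∑ i, exp (z i) := by
  simp only [boltz, softmaxVec, sum_div, mul_div_assoc]

lemma boltz_cons_zero {m : ℕ} (v : Fin m → ℝ) :
    boltz (Fin.cons 0 v : Fin (m + 1) → ℝ) = (∑ i, v i * exp (v i)) / (1 + ∑ i, exp (v i)) := by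
  simp [boltz_eq_div, Fin.sum_univ_succ]

lemma boltz_eq_add_boltz_cons {m : ℕ} (z : Fin (m + 1) → ℝ) :
    boltz z = z 0 + boltz (Fin.cons 0 fun j => z j.succ - z 0 : Fin (m + 1) → ℝ) := by
  have hz : z = fun i => (Fin.cons 0 fun j => z j.succ - z 0 : Fin (m + 1) → ℝ) i + z 0 := by
    funext i
    cases i using Fin.cases <;> simp
  conv_lhs => rw [hz, boltz_add_const]
  ring

lemma sub_mul_exp_neg_lt {c δ d : ℝ} (hc : 0 ≤ c) (hδ : 1 + c < δ) (hd : δ < d) :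
    (d * (1 + c) - δ * c) * exp (-d) < δ * exp (-δ) := by
  have hgap : d * (1 + c) - δ * c < δ * exp (d - δ) :=
    calc d * (1 + c) - δ * c = δ + (1 + c) * (d - δ) := by ring
      _ < δ * (d - δ + 1) := by nlinarith
      _ ≤ δ * exp (d - δ) :=
        mul_le_mul_of_nonneg_left (by linarith [add_one_le_exp (d - δ)]) (by linarith)
  calc (d * (1 + c) - δ * c) * exp (-d) < δ * exp (d - δ) * exp (-d) := by gcongr
    _ = δ * exp (-δ) := by rw [mul_assoc, ← exp_add]; ring_nf

lemma const_lt_sum_mul_exp_div_one_add_sum_exp {ι : Type*} [Fintype ι] [Nonempty ι] {δ : ℝ}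
    (hδ : 1 + Fintype.card ι * exp (-δ) < δ) {v : ι → ℝ} (hv : ∀ i, v i < -δ) :
    Fintype.card ι * (-δ * exp (-δ)) / (1 + Fintype.card ι * exp (-δ)) <
      (∑ i, v i * exp (v i)) / (1 + ∑ i, exp (v i)) := by
  set c := Fintype.card ι * exp (-δ)
  have hc : 0 ≤ c := by positivity
  have hterm : ∀ i ∈ univ, -(δ * exp (-δ)) - δ * c * exp (v i) < v i * exp (v i) * (1 + c) := by
    intro i _
    have := sub_mul_exp_neg_lt hc hδ (lt_neg_of_lt_neg (hv i))
    rw [neg_neg] at this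
    linarith
  have hsum := sum_lt_sum_of_nonempty univ_nonempty hterm
  simp only [sum_sub_distrib, sum_const, card_univ, nsmul_eq_mul, ← mul_sum,
    ← sum_mul] at hsum
  rw [div_lt_div_iff₀ (by positivity) (by positivity)]
  linarith

lemma one_add_mul_exp_neg_lt {x δ : ℝ} (hx : 0 ≤ x) (hδ : log (x + 1) + 1 < δ) :
    1 + x * exp (-δ) < δ := by
  have hx1 : 0 < x + 1 := by linarith
  have hexp : exp (-δ) < (x + 1)⁻¹ := by
    rw [← exp_log hx1, ← exp_neg]
    exact exp_lt_exp.mpr (by linarith)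
  have hlog : x * (x + 1)⁻¹ ≤ log (x + 1) := by
    have := one_sub_inv_le_log_of_pos hx1
    rwa [show x * (x + 1)⁻¹ = 1 - (x + 1)⁻¹ by field_simp; ring]
  nlinarith

/-- if the entries of `z` are strictly decreasing with gaps greater than
`δ > ln n + 1`, then `Boltz(z) > Boltz(z₁, z₁ − δ, …, z₁ − δ)`. -/
theorem boltz_gt_boltz_flat {n : ℕ} (hn : 2 ≤ n) (δ : ℝ) (hδ : δ > Real.log n + 1)
    (z : Fin n → ℝ) (hsep : ∀ i j : Fin n, i < j → z i - z j > δ) :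
    boltz z >
      boltz (fun k : Fin n =>
        if k = ⟨0, by omega⟩ then z ⟨0, by omega⟩ else z ⟨0, by omega⟩ - δ) := by
  obtain ⟨m, rfl⟩ : ∃ m, n = m + 1 := ⟨n - 1, by omega⟩
  have : Nonempty (Fin m) := ⟨⟨0, by omega⟩⟩
  have hc : 1 + m * exp (-δ) < δ :=
    one_add_mul_exp_neg_lt m.cast_nonneg (by push_cast at hδ; linarith)
  have hv : ∀ j : Fin m, z j.succ - z 0 < -δ := fun j => by
    linarith [hsep 0 j.succ (Fin.succ_pos j)]
  have hlt := const_lt_sum_mul_exp_div_one_add_sum_exp (by simpa using hc) hv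
  have hflat : boltz (fun k : Fin (m + 1) => if k = 0 then z 0 else z 0 - δ) =
      z 0 + boltz (Fin.cons 0 fun _ => -δ : Fin (m + 1) → ℝ) := by
    rw [boltz_eq_add_boltz_cons]
    simp
  rw [Fin.mk_zero, hflat, boltz_eq_add_boltz_cons z, boltz_cons_zero, boltz_cons_zero]
  simpa using hlt
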